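/- arXiv:2304.14262 — 2 statements merged into one kernel-verified Lean document; each statement's English description precedes it below -/
import Mathlib

section
/- For every market with truncated additive valuations there exists a competitive price vector p* that is componentwise minimum among all competitive price vectors, i.e. p* is competitive and for every competitive price vector q and every object i one has p*(i) ≤ q(i); in particular the componentwise minimum competitive price vector exists and is unique. -/
/-!
The Lyapunov function `L p = ∑ⱼ Vⱼ p + ∑ᵢ bᵢ pᵢ`, where `Vⱼ` is buyer `j`'s indirect utility, is
continuous and submodular in the prices; submodularity of each `Vⱼ` comes from an exchange
property of bundles of truncated additive buyers. Minimisers of `L` over `p ≥ 0` are competitive: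
raising a minimiser slightly on a set `S` of goods shows that demanded bundles can be chosen to
fit into the supply of `S`, and since each demand set consists of "all of `Hⱼ` plus `cⱼ` units
of `Tⱼ`", Hall's theorem turns these inequalities into a stable allocation. Conversely `L` is
nondecreasing above a competitive `q`, so by submodularity `p ⊓ q` is again a minimiser whenever
`p` is. The minimisers therefore form a closed sublattice meeting a compact box of prices, so
it has a least element, and this is the least competitive price vector.
-/

open Finset

section MarketDefs

variable {Ω N : Type*}

/-- A bundle for a buyer with demand `dj`: at most `b i` copies of each object,
at most `dj` items in total. -/
def IsBundle [Fintype Ω] (b : Ω → ℕ) (dj : ℕ) (y : Ω → ℕ) : Prop :=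
  (∀ i, y i ≤ b i) ∧ ∑ i, y i ≤ dj

/-- Utility of bundle `y` at prices `p` for a buyer with per-unit valuations `v`. -/
noncomputable def utility [Fintype Ω] (v : Ω → ℕ) (p : Ω → ℝ) (y : Ω → ℕ) : ℝ :=
  ∑ i, ((v i : ℝ) - p i) * (y i : ℝ)

/-- `y` is a preferred bundle (member of the demand set `D_j(p)`). -/
def InDemand [Fintype Ω] (b : Ω → ℕ) (dj : ℕ) (v : Ω → ℕ) (p : Ω → ℝ) (y : Ω → ℕ) : Prop :=
  IsBundle b dj y ∧ ∀ z, IsBundle b dj z → utility v p z ≤ utility v p y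

/-- Feasible allocation. -/
def Feasible [Fintype Ω] [Fintype N] (b : Ω → ℕ) (d : N → ℕ) (x : Ω → N → ℕ) : Prop :=
  (∀ i, ∑ j, x i j ≤ b i) ∧ ∀ j, ∑ i, x i j ≤ d j

/-- Stable allocation at prices `p`: feasible, and every buyer gets a preferred bundle. -/
def Stable [Fintype Ω] [Fintype N] (b : Ω → ℕ) (d : N → ℕ) (v : Ω → N → ℕ)
    (p : Ω → ℝ) (x : Ω → N → ℕ) : Prop :=
  Feasible b d x ∧ ∀ j, InDemand b (d j) (fun i => v i j) p (fun i => x i j)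

/-- Competitive price vector: nonnegative, and some allocation is stable for it. -/
def Competitive [Fintype Ω] [Fintype N] (b : Ω → ℕ) (d : N → ℕ) (v : Ω → N → ℕ)
    (p : Ω → ℝ) : Prop :=
  (∀ i, 0 ≤ p i) ∧ ∃ x, Stable b d v p x

/-- Walrasian price vector: some stable allocation sells as much as possible. -/
def Walrasian [Fintype Ω] [Fintype N] (b : Ω → ℕ) (d : N → ℕ) (v : Ω → N → ℕ)
    (p : Ω → ℝ) : Prop :=
  (∀ i, 0 ≤ p i) ∧ ∃ x, Stable b d v p x ∧
    ∑ i, ∑ j, x i j = min (∑ i, b i) (∑ j, d j)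

/-- Componentwise minimum Walrasian price vector. -/
def MinWalrasian [Fintype Ω] [Fintype N] (b : Ω → ℕ) (d : N → ℕ) (v : Ω → N → ℕ)
    (p : Ω → ℝ) : Prop :=
  Walrasian b d v p ∧ ∀ q, Walrasian b d v q → ∀ i, p i ≤ q i

end MarketDefs

open Filter Topology

theorem Finset.exists_le_le_sum_eq {ι : Type*} [DecidableEq ι] (s : Finset ι) {lo hi : ι → ℕ}
    (hle : lo ≤ hi) {n : ℕ} (hlo : ∑ i ∈ s, lo i ≤ n) (hhi : n ≤ ∑ i ∈ s, hi i) :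
    ∃ g, lo ≤ g ∧ g ≤ hi ∧ ∑ i ∈ s, g i = n := by
  induction s using Finset.induction_on generalizing n with
  | empty => exact ⟨lo, le_rfl, hle, by simp_all⟩
  | insert a s ha ih =>
    rw [sum_insert ha] at hlo hhi
    have hs : ∑ i ∈ s, lo i ≤ ∑ i ∈ s, hi i := sum_le_sum fun i _ => hle i
    have ha' : lo a ≤ hi a := hle a
    obtain ⟨k, hk⟩ : ∃ k, k ≤ hi a ∧ k ≤ n - ∑ i ∈ s, lo i ∧ (k = hi a ∨ k = n - ∑ i ∈ s, lo i) :=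
      ⟨_, min_le_left _ _, min_le_right _ _, min_choice _ _⟩
    obtain ⟨g, hlog, hghi, hg⟩ := ih (n := n - k) (by omega) (by omega)
    refine ⟨Function.update g a k, fun i => (?_ : lo i ≤ _), fun i => (?_ : _ ≤ hi i), ?_⟩
    · rcases eq_or_ne i a with rfl | hia
      · rw [Function.update_self]; omega
      · simpa [hia] using hlog i
    · rcases eq_or_ne i a with rfl | hia
      · rw [Function.update_self]; omega
      · simpa [hia] using hghi i
    · rw [sum_insert ha, Function.update_self, sum_update_of_notMem ha]
      omega

theorem exists_transport_of_hall {ι α : Type*} [Fintype ι] [Fintype α] [DecidableEq α]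
    (T : ι → Finset α) (c : ι → ℕ) (r : α → ℕ)
    (hall : ∀ U : Finset ι, ∑ j ∈ U, c j ≤ ∑ i ∈ U.biUnion T, r i) :
    ∃ g : ι → α → ℕ, (∀ j, ∀ i ∉ T j, g j i = 0) ∧ (∀ j, ∑ i, g j i = c j) ∧
      ∀ i, ∑ j, g j i ≤ r i := by
  classical
  -- split each demand and each capacity into units and match units by Hall's theorem
  let nbr : (Σ j, Fin (c j)) → Finset (Σ i, Fin (r i)) := fun x => (T x.1).sigma fun _ => univ
  have hHall : ∀ A : Finset (Σ j, Fin (c j)), #A ≤ #(A.biUnion nbr) := by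
    intro A
    set J := A.image Sigma.fst
    calc #A ≤ #(J.sigma fun j => (univ : Finset (Fin (c j)))) :=
          card_le_card fun x hx => mem_sigma.2 ⟨mem_image_of_mem _ hx, mem_univ _⟩
      _ = ∑ j ∈ J, c j := by simp [card_sigma]
      _ ≤ ∑ i ∈ J.biUnion T, r i := hall J
      _ = #((J.biUnion T).sigma fun i => (univ : Finset (Fin (r i)))) := by simp [card_sigma]
      _ = #(A.biUnion nbr) := by
          congr 1; ext ⟨i, u⟩; simp [nbr, J]
  obtain ⟨f, hf, hfnbr⟩ := (all_card_le_biUnion_card_iff_exists_injective nbr).1 hHall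
  have hfT : ∀ x, (f x).1 ∈ T x.1 := fun x => (mem_sigma.1 (hfnbr x)).1
  refine ⟨fun j i => #{u : Fin (c j) | (f ⟨j, u⟩).1 = i}, fun j i hi => ?_, fun j => ?_,
    fun i => ?_⟩
  · exact card_eq_zero.2 (filter_eq_empty_iff.2 fun u _ hu => hi (hu ▸ hfT ⟨j, u⟩))
  · rw [← card_eq_sum_card_fiberwise (fun _ _ => mem_univ _), card_univ, Fintype.card_fin]
  · calc ∑ j, #{u : Fin (c j) | (f ⟨j, u⟩).1 = i}
        = #{x : Σ j, Fin (c j) | (f x).1 = i} := by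
          rw [← card_sigma]; congr 1; ext ⟨j, u⟩; simp
      _ ≤ #{y : Σ i, Fin (r i) | y.1 = i} :=
          card_le_card_of_injOn f (fun x hx => by simpa using hx) hf.injOn
      _ = r i := by
          rw [show ({y : Σ i, Fin (r i) | y.1 = i} : Finset _) =
            ({i} : Finset α).sigma fun _ => univ by ext ⟨i', u⟩; simp]
          simp [card_sigma]

theorem IsCompact.exists_isLeast_of_inf_mem {ι : Type*} [Fintype ι] {K : Set (ι → ℝ)}
    (hK : IsCompact K) (hne : K.Nonempty) (hinf : ∀ p ∈ K, ∀ q ∈ K, p ⊓ q ∈ K) :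
    ∃ p, IsLeast K p := by
  obtain ⟨p, hp, hmin⟩ := hK.exists_isMinOn hne (continuous_finsetSum univ fun i _ =>
    continuous_apply i).continuousOn
  refine ⟨p, hp, fun q hq => fun i => ?_⟩
  have hle : ∀ i ∈ univ, (p ⊓ q) i ≤ p i := fun _ _ => inf_le_left
  have heq := (sum_eq_sum_iff_of_le hle).1 (le_antisymm (sum_le_sum hle) (hmin (hinf p hp q hq)))
  exact (heq i (mem_univ i)).symm.le.trans inf_le_right

section IndirectUtility

variable {Ω : Type*} [Fintype Ω] (b : Ω → ℕ) (dj : ℕ) (v : Ω → ℕ)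

theorem continuous_utility (y : Ω → ℕ) : Continuous fun p => utility v p y := by
  unfold utility; fun_prop

theorem utility_sub_utility (p q : Ω → ℝ) (y : Ω → ℕ) :
    utility v q y - utility v p y = -∑ i, (q i - p i) * y i := by
  simp only [utility, ← sum_sub_distrib, ← sum_neg_distrib]
  exact sum_congr rfl fun i _ => by ring

theorem utility_add (p : Ω → ℝ) (y z : Ω → ℕ) :
    utility v p (y + z) = utility v p y + utility v p z := by
  simp only [utility, ← sum_add_distrib, Pi.add_apply, Nat.cast_add, mul_add]

theorem utility_single [DecidableEq Ω] (p : Ω → ℝ) (i : Ω) :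
    utility v p (Pi.single i 1) = v i - p i := by
  simp [utility, Pi.single_apply]

open Classical in
noncomputable def bundles : Finset (Ω → ℕ) :=
  (Fintype.piFinset fun i => range (b i + 1)).filter fun y => ∑ i, y i ≤ dj

variable {b dj} in
theorem mem_bundles {y : Ω → ℕ} : y ∈ bundles b dj ↔ IsBundle b dj y := by
  simp [bundles, IsBundle, Fintype.mem_piFinset]

theorem isBundle_zero : IsBundle b dj 0 := ⟨fun _ => Nat.zero_le _, by simp⟩

theorem bundles_nonempty : (bundles b dj).Nonempty := ⟨0, mem_bundles.2 (isBundle_zero b dj)⟩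

noncomputable def indirectUtility (p : Ω → ℝ) : ℝ :=
  (bundles b dj).sup' (bundles_nonempty b dj) (utility v p)

theorem continuous_indirectUtility : Continuous (indirectUtility b dj v) :=
  Continuous.finset_sup'_apply _ fun y _ => continuous_utility v y

theorem exists_inDemand (p : Ω → ℝ) : ∃ y, InDemand b dj v p y := by
  obtain ⟨y, hy, hmax⟩ := exists_max_image (bundles b dj) (utility v p) (bundles_nonempty b dj)
  exact ⟨y, mem_bundles.1 hy, fun z hz => hmax z (mem_bundles.2 hz)⟩

variable {b dj v}

theorem utility_le_indirectUtility {p : Ω → ℝ} {y : Ω → ℕ} (hy : IsBundle b dj y) :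
    utility v p y ≤ indirectUtility b dj v p :=
  le_sup' _ (mem_bundles.2 hy)

theorem InDemand.utility_eq {p : Ω → ℝ} {y : Ω → ℕ} (hy : InDemand b dj v p y) :
    utility v p y = indirectUtility b dj v p := by
  refine le_antisymm (utility_le_indirectUtility hy.1) (sup'_le _ _ fun z hz => ?_)
  exact hy.2 z (mem_bundles.1 hz)

theorem inDemand_of_utility_eq {p : Ω → ℝ} {y : Ω → ℕ} (hy : IsBundle b dj y)
    (h : utility v p y = indirectUtility b dj v p) : InDemand b dj v p y :=
  ⟨hy, fun _ hz => h ▸ utility_le_indirectUtility hz⟩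

theorem InDemand.indirectUtility_add_le {q : Ω → ℝ} {y : Ω → ℕ}
    (hy : InDemand b dj v q y) (p : Ω → ℝ) :
    indirectUtility b dj v q + ∑ i, (q i - p i) * y i ≤ indirectUtility b dj v p := by
  have := utility_sub_utility v p q y
  have : utility v p y ≤ indirectUtility b dj v p := utility_le_indirectUtility hy.1
  rw [← hy.utility_eq]
  linarith

theorem indirectUtility_inf_le {M : Ω → ℝ} (hv : ∀ i, (v i : ℝ) ≤ M i) (p : Ω → ℝ) :
    indirectUtility b dj v (p ⊓ M) ≤ indirectUtility b dj v p := by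
  classical
  obtain ⟨y, hy⟩ := exists_inDemand b dj v (p ⊓ M)
  -- drop the goods whose price was capped: their margin at `p ⊓ M` is nonpositive
  set y' : Ω → ℕ := fun i => if p i ≤ M i then y i else 0
  have hy' : IsBundle b dj y' := by
    refine ⟨fun i => ?_, le_trans (sum_le_sum fun i _ => ?_) hy.1.2⟩ <;>
      · dsimp only [y']; split_ifs <;> simp [hy.1.1 i]
  rw [← hy.utility_eq]
  refine le_trans (sum_le_sum fun i _ => ?_) (utility_le_indirectUtility (p := p) hy')
  dsimp only [y']
  split_ifs with h
  · rw [Pi.inf_apply, inf_eq_left.2 h]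
  · rw [Pi.inf_apply, inf_eq_right.2 (le_of_not_ge h), Nat.cast_zero, mul_zero]
    exact mul_nonpos_of_nonpos_of_nonneg (by linarith [hv i]) (Nat.cast_nonneg _)

theorem IsBundle.exists_exchange {y z : Ω → ℕ} (hy : IsBundle b dj y) (hz : IsBundle b dj z)
    (s : Set Ω) : ∃ y' z', IsBundle b dj y' ∧ IsBundle b dj z' ∧ y' + z' = y + z ∧
      (∀ i ∈ s, y i ≤ y' i) ∧ ∀ i ∉ s, y' i ≤ z i := by
  classical
  set lo : Ω → ℕ := fun i => if i ∈ s then y i else y i + z i - b i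
  set hi : Ω → ℕ := fun i => if i ∈ s then min (b i) (y i + z i) else z i
  have hlo : ∀ i, lo i ≤ y i ∧ y i + z i ≤ lo i + b i := fun i => by
    have := hy.1 i; have := hz.1 i; simp only [lo]; split_ifs <;> omega
  have hhi : ∀ i, lo i ≤ hi i ∧ z i ≤ hi i ∧ hi i ≤ b i ∧ hi i ≤ y i + z i := fun i => by
    have := hy.1 i; have := hz.1 i; simp only [lo, hi]; split_ifs <;> omega
  have hsum_lo : ∑ i, lo i ≤ ∑ i, y i := sum_le_sum fun i _ => (hlo i).1
  have hsum_hi : ∑ i, z i ≤ ∑ i, hi i := sum_le_sum fun i _ => (hhi i).2.1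
  have hsum_yz : ∑ i, (y + z) i = ∑ i, y i + ∑ i, z i := sum_add_distrib
  obtain ⟨g, hlog, hghi, hg⟩ := univ.exists_le_le_sum_eq (fun i => (hhi i).1)
    (n := max (∑ i, lo i) (∑ i, (y + z) i - dj)) (le_max_left _ _)
    (max_le (sum_le_sum fun i _ => (hhi i).1) (by have := hy.2; omega))
  have hgyz : g ≤ y + z := fun i => (hghi i).trans (hhi i).2.2.2
  have hsum : ∑ i, g i + ∑ i, (y + z - g) i = ∑ i, (y + z) i := by
    rw [← sum_add_distrib]; exact sum_congr rfl fun i _ => add_tsub_cancel_of_le (hgyz i)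
  refine ⟨g, y + z - g, ⟨fun i => (hghi i).trans (hhi i).2.2.1, ?_⟩, ⟨fun i => ?_, ?_⟩,
    add_tsub_cancel_of_le hgyz, fun i hi' => ?_, fun i hi' => ?_⟩
  · have := hy.2; have := hz.2; omega
  · have := (hlo i).2; have : lo i ≤ g i := hlog i
    simp only [Pi.sub_apply, Pi.add_apply]; omega
  · omega
  · simpa [lo, hi'] using hlog i
  · simpa [hi, hi'] using hghi i

theorem indirectUtility_inf_add_sup_le (p q : Ω → ℝ) :
    indirectUtility b dj v (p ⊓ q) + indirectUtility b dj v (p ⊔ q) ≤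
      indirectUtility b dj v p + indirectUtility b dj v q := by
  obtain ⟨y, hy⟩ := exists_inDemand b dj v (p ⊓ q)
  obtain ⟨z, hz⟩ := exists_inDemand b dj v (p ⊔ q)
  obtain ⟨y', z', hy', hz', hsum, hs, hns⟩ := hy.1.exists_exchange hz.1 {i | p i ≤ q i}
  rw [← hy.utility_eq, ← hz.utility_eq]
  refine le_trans ?_ (add_le_add (utility_le_indirectUtility (p := p) hy')
    (utility_le_indirectUtility (p := q) hz'))
  simp only [utility, ← sum_add_distrib]
  refine sum_le_sum fun i _ => ?_
  have hi : (z' i : ℝ) = y i + z i - y' i := by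
    have : y' i + z' i = y i + z i := congrFun hsum i
    rw [eq_sub_iff_add_eq']; exact_mod_cast this
  rw [hi, Pi.inf_apply, Pi.sup_apply]
  by_cases h : p i ≤ q i
  · have : (y i : ℝ) ≤ y' i := by exact_mod_cast hs i h
    rw [inf_eq_left.2 h, sup_eq_right.2 h]
    nlinarith [mul_nonneg (sub_nonneg.2 h) (sub_nonneg.2 this)]
  · have : (y' i : ℝ) ≤ z i := by exact_mod_cast hns i h
    rw [inf_eq_right.2 (le_of_not_ge h), sup_eq_left.2 (le_of_not_ge h)]
    nlinarith [mul_nonneg (sub_nonneg.2 (le_of_not_ge h)) (sub_nonneg.2 this)]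

variable (b dj v) in
theorem eventually_inDemand_imp (p : Ω → ℝ) :
    ∀ᶠ q in 𝓝 p, ∀ y, InDemand b dj v q y → InDemand b dj v p y := by
  classical
  have h : ∀ y ∈ (bundles b dj).filter (¬ InDemand b dj v p ·),
      ∀ᶠ q in 𝓝 p, utility v q y < indirectUtility b dj v q := fun y hy => by
    obtain ⟨hyB, hyD⟩ := mem_filter.1 hy
    refine (continuous_utility v y).continuousAt.eventually_lt
      (continuous_indirectUtility b dj v).continuousAt ?_
    exact (utility_le_indirectUtility (mem_bundles.1 hyB)).lt_of_ne
      fun h => hyD (inDemand_of_utility_eq (mem_bundles.1 hyB) h)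
  filter_upwards [(eventually_all_finset _).2 h] with q hq y hyq
  by_contra hyp
  exact (hq y (mem_filter.2 ⟨mem_bundles.2 hyq.1, hyp⟩)).ne hyq.utility_eq

end IndirectUtility

section Margins

variable {Ω : Type*} [Fintype Ω] {b : Ω → ℕ} {dj : ℕ} {v : Ω → ℕ} {p : Ω → ℝ} {y : Ω → ℕ}

theorem InDemand.margin_nonpos (hy : InDemand b dj v p y) (hsum : ∑ i, y i < dj) {i : Ω}
    (hi : y i < b i) : (v i : ℝ) - p i ≤ 0 := by
  classical
  have hbundle : IsBundle b dj (y + Pi.single i 1) := by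
    refine ⟨fun k => ?_, ?_⟩
    · rcases eq_or_ne k i with rfl | hk
      · simpa using hi
      · simpa [hk] using hy.1.1 k
    · simp only [Pi.add_apply, sum_add_distrib, sum_pi_single', mem_univ, if_true]; omega
  have := hy.2 _ hbundle
  rw [utility_add, utility_single] at this
  linarith

theorem InDemand.margin_le (hy : InDemand b dj v p y) {i k : Ω} (hi : y i < b i)
    (hk : 0 < y k) : (v i : ℝ) - p i ≤ v k - p k := by
  classical
  rcases eq_or_ne i k with rfl | hik
  · exact le_rfl
  have hsingle : Pi.single k 1 ≤ y := fun l => by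
    rcases eq_or_ne l k with rfl | hl
    · simpa using Nat.one_le_iff_ne_zero.2 hk.ne'
    · simp [Pi.single_eq_of_ne hl]
  set y₀ := y - Pi.single k 1
  have hy₀ : y = y₀ + Pi.single k 1 := (tsub_add_cancel_of_le hsingle).symm
  have hbundle : IsBundle b dj (y₀ + Pi.single i 1) := by
    refine ⟨fun l => ?_, ?_⟩
    · have := hy.1.1 l
      rcases eq_or_ne l i with rfl | hl
      · simp only [y₀, Pi.add_apply, Pi.sub_apply, Pi.single_eq_same, Pi.single_eq_of_ne hik]
        omega
      · simp only [y₀, Pi.add_apply, Pi.sub_apply, Pi.single_eq_of_ne hl, add_zero]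
        omega
    · have := hy.1.2
      rw [hy₀] at this
      simpa only [Pi.add_apply, sum_add_distrib, sum_pi_single', mem_univ, if_true] using this
  have := hy.2 _ hbundle
  rw [hy₀, utility_add, utility_add, utility_single, utility_single] at this
  linarith

variable (v) (p)

noncomputable def marginAbove (t : ℝ) : Finset Ω := univ.filter fun i => t < (v i : ℝ) - p i

noncomputable def marginAtLeast (t : ℝ) : Finset Ω := univ.filter fun i => t ≤ (v i : ℝ) - p i

variable {v p}

@[simp] theorem mem_marginAbove {t : ℝ} {i : Ω} :
    i ∈ marginAbove v p t ↔ t < (v i : ℝ) - p i := by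
  simp [marginAbove]

@[simp] theorem mem_marginAtLeast {t : ℝ} {i : Ω} :
    i ∈ marginAtLeast v p t ↔ t ≤ (v i : ℝ) - p i := by
  simp [marginAtLeast]

theorem marginAtLeast_subset_marginAbove {s t : ℝ} (h : s < t) :
    marginAtLeast v p t ⊆ marginAbove v p s := fun _ hi =>
  mem_marginAbove.2 (h.trans_le (mem_marginAtLeast.1 hi))

theorem InDemand.sum_lt_of_lt (hy : InDemand b dj v p y) {i : Ω} (hi : y i < b i) :
    ∑ k, y k < ∑ k ∈ marginAtLeast v p ((v i : ℝ) - p i), b k := by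
  rw [← sum_subset (subset_univ _) fun k _ hk => ?_]
  · exact sum_lt_sum (fun k _ => hy.1.1 k) ⟨i, mem_marginAtLeast.2 le_rfl, hi⟩
  · by_contra hyk
    exact hk (mem_marginAtLeast.2 (hy.margin_le hi (Nat.pos_of_ne_zero hyk)))

theorem InDemand.sum_marginAbove_lt (hy : InDemand b dj v p y) {k : Ω} (hk : 0 < y k) :
    ∑ i ∈ marginAbove v p ((v k : ℝ) - p k), b i < ∑ i, y i := by
  classical
  have hfull : ∀ i ∈ marginAbove v p ((v k : ℝ) - p k), y i = b i := fun i hi => by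
    by_contra hne
    exact (mem_marginAbove.1 hi).not_ge (hy.margin_le ((hy.1.1 i).lt_of_ne hne) hk)
  have hk' : k ∉ marginAbove v p ((v k : ℝ) - p k) := by simp
  calc ∑ i ∈ marginAbove v p ((v k : ℝ) - p k), b i
      < ∑ i ∈ insert k (marginAbove v p ((v k : ℝ) - p k)), y i := by
        rw [sum_insert hk', sum_congr rfl hfull]; exact lt_add_of_pos_left _ hk
    _ ≤ ∑ i, y i := sum_le_sum_of_subset (subset_univ _)

theorem InDemand.min_le_sum (hy : InDemand b dj v p y) :
    min dj (∑ i ∈ marginAbove v p 0, b i) ≤ ∑ i, y i := by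
  by_cases hsum : ∑ i, y i < dj
  · have hfull : ∀ i ∈ marginAbove v p 0, y i = b i := fun i hi => by
      by_contra hne
      exact (mem_marginAbove.1 hi).not_ge (hy.margin_nonpos hsum ((hy.1.1 i).lt_of_ne hne))
    rw [← sum_congr rfl hfull]
    exact min_le_of_right_le (sum_le_sum_of_subset (subset_univ _))
  · exact min_le_of_left_le (not_lt.1 hsum)

theorem inDemand_of_threshold {t : ℝ} (hy : IsBundle b dj y) (ht : 0 ≤ t)
    (habove : ∀ i, t < (v i : ℝ) - p i → y i = b i)
    (hbelow : ∀ i, (v i : ℝ) - p i < t → y i = 0) (hsum : t = 0 ∨ ∑ i, y i = dj) :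
    InDemand b dj v p y := by
  refine ⟨hy, fun z hz => ?_⟩
  have hterm : ∀ i, ((v i : ℝ) - p i) * z i ≤ ((v i : ℝ) - p i) * y i + t * (z i - y i) := by
    intro i
    rcases lt_trichotomy ((v i : ℝ) - p i) t with h | h | h
    · rw [hbelow i h, Nat.cast_zero]
      nlinarith [mul_nonneg (sub_nonneg.2 h.le) (Nat.cast_nonneg (α := ℝ) (z i))]
    · exact le_of_eq (by rw [h]; ring)
    · have : (z i : ℝ) ≤ y i := by rw [habove i h]; exact_mod_cast hz.1 i
      nlinarith
  have htotal : t * ∑ i, (z i : ℝ) ≤ t * ∑ i, (y i : ℝ) := by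
    rcases hsum with rfl | hsum
    · simp
    · refine mul_le_mul_of_nonneg_left ?_ ht
      exact_mod_cast hsum ▸ hz.2
  calc utility v p z ≤ ∑ i, (((v i : ℝ) - p i) * y i + t * (z i - y i)) :=
        sum_le_sum fun i _ => hterm i
    _ = utility v p y + (t * ∑ i, (z i : ℝ) - t * ∑ i, (y i : ℝ)) := by
      rw [sum_add_distrib, ← mul_sum, sum_sub_distrib, mul_sub]; rfl
    _ ≤ utility v p y := by linarith

theorem exists_margin_threshold (h : dj < ∑ i ∈ marginAbove v p 0, b i) :
    ∃ t, 0 < t ∧ ∑ i ∈ marginAbove v p t, b i ≤ dj ∧ dj < ∑ i ∈ marginAtLeast v p t, b i := by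
  classical
  set V := (univ.image fun i => (v i : ℝ) - p i).filter
    fun t => 0 < t ∧ dj < ∑ i ∈ marginAtLeast v p t, b i
  -- the least margin above `t` is a candidate threshold beyond `t`
  have step : ∀ t, 0 ≤ t → dj < ∑ i ∈ marginAbove v p t, b i → ∃ t' ∈ V, t < t' := by
    intro t ht hlt
    have hne : (marginAbove v p t).Nonempty := by
      by_contra hne
      simp [not_nonempty_iff_eq_empty.1 hne] at hlt
    obtain ⟨i, hi, hmin⟩ := exists_min_image _ (fun i => (v i : ℝ) - p i) hne
    have hsub : marginAbove v p t ⊆ marginAtLeast v p ((v i : ℝ) - p i) := fun k hk =>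
      mem_marginAtLeast.2 (hmin k hk)
    have hti := mem_marginAbove.1 hi
    exact ⟨_, mem_filter.2 ⟨mem_image_of_mem _ (mem_univ i), ht.trans_lt hti,
      hlt.trans_le (sum_le_sum_of_subset hsub)⟩, hti⟩
  obtain ⟨t₀, ht₀, -⟩ := step 0 le_rfl h
  have htV := V.max'_mem ⟨t₀, ht₀⟩
  obtain ⟨htpos, htlt⟩ := (mem_filter.1 htV).2
  refine ⟨_, htpos, not_lt.1 fun hlt => ?_, htlt⟩
  obtain ⟨t', ht'V, htt'⟩ := step _ htpos.le hlt
  exact (V.le_max' t' ht'V).not_gt htt'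

end Margins

section DemandSplit

variable {Ω : Type*} [Fintype Ω] [DecidableEq Ω]

/-- At prices `p` the buyer must take all of `H` and at least `c` units from `T`, and every
bundle made of `H` and exactly `c` units from `T` is demanded. -/
structure IsDemandSplit (b : Ω → ℕ) (dj : ℕ) (v : Ω → ℕ) (p : Ω → ℝ) (H T : Finset Ω)
    (c : ℕ) : Prop where
  disjoint : Disjoint H T
  eq_of_mem : ∀ y, InDemand b dj v p y → ∀ i ∈ H, y i = b i
  le_sum : ∀ y, InDemand b dj v p y → c ≤ ∑ i ∈ T, y i
  inDemand : ∀ g ≤ b, (∀ i ∉ T, g i = 0) → ∑ i, g i = c →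
    InDemand b dj v p (fun i => (if i ∈ H then b i else 0) + g i)
  sum_add_le : ∑ i ∈ H, b i + c ≤ dj

variable {b : Ω → ℕ} {dj : ℕ} {v : Ω → ℕ} {p : Ω → ℝ}

theorem isDemandSplit_of_sum_le (h : ∑ i ∈ marginAbove v p 0, b i ≤ dj) :
    IsDemandSplit b dj v p (marginAbove v p 0) ∅ 0 := by
  refine ⟨disjoint_empty_right _, fun y hy i hi => ?_, fun _ _ => Nat.zero_le _,
    fun g _ hg _ => ?_, by simpa using h⟩
  · by_contra hne
    have hlt := (hy.1.1 i).lt_of_ne hne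
    have hsum := (hy.sum_lt_of_lt hlt).trans_le <| (sum_le_sum_of_subset
      (marginAtLeast_subset_marginAbove (mem_marginAbove.1 hi))).trans h
    exact (mem_marginAbove.1 hi).not_ge (hy.margin_nonpos hsum hlt)
  · have hg0 : ∀ i, g i = 0 := fun i => hg i (notMem_empty i)
    refine inDemand_of_threshold ⟨fun i => ?_, ?_⟩ le_rfl (fun i hi => ?_) (fun i hi => ?_)
      (Or.inl rfl)
    · dsimp only; split_ifs <;> simp [hg0]
    · simpa only [hg0, add_zero, sum_ite_mem, univ_inter] using h
    · simp [hg0, hi]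
    · simp [hg0, hi.not_gt]

theorem isDemandSplit_of_lt_sum {t : ℝ} (ht : 0 < t)
    (habove : ∑ i ∈ marginAbove v p t, b i ≤ dj) (hatLeast : dj < ∑ i ∈ marginAtLeast v p t, b i) :
    IsDemandSplit b dj v p (marginAbove v p t) (marginAtLeast v p t \ marginAbove v p t)
      (dj - ∑ i ∈ marginAbove v p t, b i) := by
  have hsub : marginAbove v p t ⊆ marginAtLeast v p t := fun i hi =>
    mem_marginAtLeast.2 (mem_marginAbove.1 hi).le
  have hsum : ∀ y, InDemand b dj v p y → ∑ i, y i = dj := fun y hy =>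
    le_antisymm hy.1.2 <| (le_min le_rfl (hatLeast.le.trans (sum_le_sum_of_subset
      (marginAtLeast_subset_marginAbove ht)))).trans hy.min_le_sum
  have hfull : ∀ y, InDemand b dj v p y → ∀ i ∈ marginAbove v p t, y i = b i := by
    intro y hy i hi
    by_contra hne
    have := (hy.sum_lt_of_lt ((hy.1.1 i).lt_of_ne hne)).trans_le <| (sum_le_sum_of_subset
      (marginAtLeast_subset_marginAbove (mem_marginAbove.1 hi))).trans habove
    exact this.ne (hsum y hy)
  refine ⟨disjoint_sdiff, hfull, fun y hy => ?_, fun g hgb hg hgc => ?_, by omega⟩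
  · have hzero : ∀ k ∈ univ, k ∉ marginAtLeast v p t → y k = 0 := fun k _ hk => by
      by_contra hyk
      have := (hy.sum_marginAbove_lt (Nat.pos_of_ne_zero hyk)).trans_le hy.1.2
      exact this.not_ge <| hatLeast.le.trans <| sum_le_sum_of_subset <|
        marginAtLeast_subset_marginAbove (not_le.1 (mt mem_marginAtLeast.2 hk))
    have hsupp : ∑ k ∈ marginAtLeast v p t, y k = ∑ k, y k := sum_subset (subset_univ _) hzero
    have hsplit : ∑ k ∈ marginAtLeast v p t \ marginAbove v p t, y k + ∑ k ∈ marginAbove v p t, y k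
        = ∑ k ∈ marginAtLeast v p t, y k := sum_sdiff hsub
    have hH : ∑ k ∈ marginAbove v p t, y k = ∑ k ∈ marginAbove v p t, b k :=
      sum_congr rfl (hfull y hy)
    have := hsum y hy
    omega
  · have hgH : ∀ i ∈ marginAbove v p t, g i = 0 := fun i hi =>
      hg i fun hT => (mem_sdiff.1 hT).2 hi
    have hytotal : ∑ i, ((if i ∈ marginAbove v p t then b i else 0) + g i) = dj := by
      rw [sum_add_distrib, sum_ite_mem, univ_inter, hgc]; omega
    refine inDemand_of_threshold ⟨fun i => ?_, hytotal.le⟩ ht.le (fun i hi => ?_) (fun i hi => ?_)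
      (Or.inr hytotal)
    · dsimp only; split_ifs with h
      · simp [hgH i h]
      · simpa using hgb i
    · simp [hi, hgH i (mem_marginAbove.2 hi)]
    · have hT : i ∉ marginAtLeast v p t \ marginAbove v p t := fun h =>
        hi.not_ge (mem_marginAtLeast.1 (mem_sdiff.1 h).1)
      simp [hi.not_gt, hg i hT]

theorem exists_isDemandSplit (b : Ω → ℕ) (dj : ℕ) (v : Ω → ℕ) (p : Ω → ℝ) :
    ∃ H T c, IsDemandSplit b dj v p H T c := by
  rcases le_or_gt (∑ i ∈ marginAbove v p 0, b i) dj with h | h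
  · exact ⟨_, _, _, isDemandSplit_of_sum_le h⟩
  · obtain ⟨t, ht, habove, hatLeast⟩ := exists_margin_threshold h
    exact ⟨_, _, _, isDemandSplit_of_lt_sum ht habove hatLeast⟩

variable {H T : Finset Ω} {c : ℕ} {y : Ω → ℕ}

theorem IsDemandSplit.sum_ite_le (hs : IsDemandSplit b dj v p H T c) (hy : InDemand b dj v p y)
    (S : Finset Ω) : ∑ i ∈ S, (if i ∈ H then b i else 0) ≤ ∑ i ∈ S, y i :=
  sum_le_sum fun i _ => by
    split_ifs with h
    · exact (hs.eq_of_mem y hy i h).ge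
    · exact Nat.zero_le _

theorem IsDemandSplit.sum_ite_add_le (hs : IsDemandSplit b dj v p H T c)
    (hy : InDemand b dj v p y) {S : Finset Ω} (hT : T ⊆ S) :
    ∑ i ∈ S, (if i ∈ H then b i else 0) + c ≤ ∑ i ∈ S, y i := by
  have hH : ∑ i ∈ S \ T, (if i ∈ H then b i else 0) = ∑ i ∈ S, (if i ∈ H then b i else 0) :=
    sum_subset sdiff_subset fun i hi hiT => if_neg fun hiH =>
      disjoint_left.1 hs.disjoint hiH (by simpa [hi] using hiT)
  rw [← hH, ← sum_sdiff hT]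
  exact add_le_add (hs.sum_ite_le hy _) (hs.le_sum y hy)

end DemandSplit

section Market

variable {Ω N : Type*} [Fintype Ω] [Fintype N]

noncomputable def lyapunov (b : Ω → ℕ) (d : N → ℕ) (v : Ω → N → ℕ) (p : Ω → ℝ) : ℝ :=
  ∑ j, indirectUtility b (d j) (fun i => v i j) p + ∑ i, (b i : ℝ) * p i

theorem continuous_lyapunov (b : Ω → ℕ) (d : N → ℕ) (v : Ω → N → ℕ) :
    Continuous (lyapunov b d v) := by
  unfold lyapunov
  have := fun j => continuous_indirectUtility b (d j) (fun i => v i j)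
  fun_prop

variable {b : Ω → ℕ} {d : N → ℕ} {v : Ω → N → ℕ}

theorem lyapunov_le_add {q : Ω → ℝ} {w : N → Ω → ℕ}
    (hw : ∀ j, InDemand b (d j) (fun i => v i j) q (w j)) (p : Ω → ℝ) :
    lyapunov b d v q ≤ lyapunov b d v p + ∑ i, (q i - p i) * (b i - ∑ j, (w j i : ℝ)) := by
  have h := sum_le_sum fun j (_ : j ∈ univ) => (hw j).indirectUtility_add_le p
  have hswap : ∑ j, ∑ i, (q i - p i) * (w j i : ℝ) = ∑ i, (q i - p i) * ∑ j, (w j i : ℝ) := by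
    rw [sum_comm]; simp only [mul_sum]
  have hlin : ∑ i, (q i - p i) * (b i - ∑ j, (w j i : ℝ)) =
      ∑ i, (b i : ℝ) * q i - ∑ i, (b i : ℝ) * p i - ∑ i, (q i - p i) * ∑ j, (w j i : ℝ) := by
    simp only [← sum_sub_distrib]; exact sum_congr rfl fun i _ => by ring
  rw [sum_add_distrib, hswap] at h
  unfold lyapunov
  linarith

theorem lyapunov_inf_add_sup_le (p q : Ω → ℝ) :
    lyapunov b d v (p ⊓ q) + lyapunov b d v (p ⊔ q) ≤ lyapunov b d v p + lyapunov b d v q := by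
  have h := sum_le_sum fun j (_ : j ∈ univ) =>
    indirectUtility_inf_add_sup_le (b := b) (dj := d j) (v := fun i => v i j) p q
  have hlin : ∑ i, (b i : ℝ) * (p ⊓ q) i + ∑ i, (b i : ℝ) * (p ⊔ q) i =
      ∑ i, (b i : ℝ) * p i + ∑ i, (b i : ℝ) * q i := by
    simp only [← sum_add_distrib, ← mul_add, Pi.inf_apply, Pi.sup_apply, min_add_max]
  simp only [sum_add_distrib] at h
  unfold lyapunov
  linarith

theorem lyapunov_inf_le {M : Ω → ℝ} (hv : ∀ i j, (v i j : ℝ) ≤ M i) (p : Ω → ℝ) :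
    lyapunov b d v (p ⊓ M) ≤ lyapunov b d v p :=
  add_le_add (sum_le_sum fun j _ => indirectUtility_inf_le (fun i => hv i j) p)
    (sum_le_sum fun _ _ => mul_le_mul_of_nonneg_left inf_le_left (Nat.cast_nonneg _))

theorem Competitive.lyapunov_le {q q' : Ω → ℝ} (hq : Competitive b d v q) (h : q ≤ q') :
    lyapunov b d v q ≤ lyapunov b d v q' := by
  obtain ⟨-, x, ⟨hsupply, -⟩, hdemand⟩ := hq
  refine (lyapunov_le_add (w := fun j i => x i j) hdemand q').trans
    (add_le_of_nonpos_right (sum_nonpos fun i _ => ?_))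
  have : ((∑ j, x i j : ℕ) : ℝ) ≤ b i := by exact_mod_cast hsupply i
  push_cast at this
  exact mul_nonpos_of_nonpos_of_nonneg (by linarith [h i]) (by linarith)

theorem IsMinOn.lyapunov_inf {p q : Ω → ℝ} (hp : IsMinOn (lyapunov b d v) (Set.Ici 0) p)
    (hq : lyapunov b d v q ≤ lyapunov b d v (p ⊔ q)) :
    IsMinOn (lyapunov b d v) (Set.Ici 0) (p ⊓ q) := fun r hr => by
  have := lyapunov_inf_add_sup_le (b := b) (d := d) (v := v) p q
  have : lyapunov b d v p ≤ lyapunov b d v r := hp hr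
  show lyapunov b d v (p ⊓ q) ≤ lyapunov b d v r
  linarith

theorem exists_isLeast_minimizers_lyapunov (b : Ω → ℕ) (d : N → ℕ) (v : Ω → N → ℕ) :
    ∃ p, IsLeast {p | p ∈ Set.Ici 0 ∧ IsMinOn (lyapunov b d v) (Set.Ici 0) p} p := by
  set L := lyapunov b d v
  set minimizers := {p | p ∈ Set.Ici 0 ∧ IsMinOn L (Set.Ici 0) p}
  -- prices above every valuation are never needed
  set M : Ω → ℝ := fun i => ((univ.sup fun j => v i j : ℕ) : ℝ)
  have hM0 : 0 ≤ M := fun _ => Nat.cast_nonneg _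
  have hvM : ∀ i j, (v i j : ℝ) ≤ M i := fun i j =>
    Nat.cast_le.2 (le_sup (f := fun j => v i j) (mem_univ j))
  have hinf : ∀ p ∈ minimizers, ∀ q ∈ minimizers, p ⊓ q ∈ minimizers := fun p hp q hq =>
    ⟨Set.mem_Ici.2 (le_inf hp.1 hq.1),
      hp.2.lyapunov_inf (hq.2 (show 0 ≤ p ⊔ q from le_sup_of_le_right hq.1))⟩
  have hclosed : IsClosed minimizers := by
    have : minimizers = Set.Ici 0 ∩ ⋂ q ∈ Set.Ici 0, {p | L p ≤ L q} := by
      ext p; simp [minimizers, isMinOn_iff]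
    rw [this]
    exact isClosed_Ici.inter <|
      isClosed_biInter fun q _ => isClosed_le (continuous_lyapunov b d v) continuous_const
  obtain ⟨p₀, hp₀, hp₀min⟩ := (isCompact_Icc (a := 0) (b := M)).exists_isMinOn
    ⟨0, le_rfl, hM0⟩ (continuous_lyapunov b d v).continuousOn
  have hp₀min' : IsMinOn L (Set.Ici 0) p₀ := fun q hq =>
    (hp₀min ⟨le_inf hq hM0, inf_le_right⟩).trans (lyapunov_inf_le hvM q)
  obtain ⟨p, ⟨hpMin, hpM⟩, hleast⟩ := (isCompact_Icc.inter_left hclosed).exists_isLeast_of_inf_mem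
    ⟨p₀, ⟨hp₀.1, hp₀min'⟩, hp₀⟩ fun p hp q hq =>
      ⟨hinf p hp.1 q hq.1, le_inf hp.2.1 hq.2.1, inf_le_left.trans hp.2.2⟩
  refine ⟨p, hpMin, fun q hq => ?_⟩
  have := hleast ⟨hinf p hpMin q hq, le_inf hpMin.1 hq.1, inf_le_left.trans hpM.2⟩
  exact this.trans inf_le_right

variable {p : Ω → ℝ}

theorem IsMinOn.exists_inDemand_sum_le (hp : 0 ≤ p)
    (hmin : IsMinOn (lyapunov b d v) (Set.Ici 0) p) (S : Finset Ω) :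
    ∃ w : N → Ω → ℕ, (∀ j, InDemand b (d j) (fun i => v i j) p (w j)) ∧
      ∑ i ∈ S, ∑ j, w j i ≤ ∑ i ∈ S, b i := by
  classical
  -- raise the prices of `S` slightly: demand at the new prices is still demand at `p`
  set s : Ω → ℝ := fun i => if i ∈ S then 1 else 0
  have hpath : Tendsto (fun ε : ℝ => p + ε • s) (𝓝[>] 0) (𝓝 p) := by
    have : Continuous fun ε : ℝ => p + ε • s := by fun_prop
    simpa using (this.tendsto 0).mono_left nhdsWithin_le_nhds
  obtain ⟨ε, hdem, hε⟩ := ((hpath.eventually (eventually_all.2 fun j =>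
    eventually_inDemand_imp b (d j) (fun i => v i j) p)).and
    self_mem_nhdsWithin).exists
  choose w hw using fun j => exists_inDemand b (d j) (fun i => v i j) (p + ε • s)
  refine ⟨w, fun j => hdem j _ (hw j), ?_⟩
  have hq : p + ε • s ∈ Set.Ici 0 := fun i => by
    have : 0 ≤ p i := hp i
    simp only [s, Pi.add_apply, Pi.smul_apply, smul_eq_mul, Pi.zero_apply]
    split_ifs <;> linarith
  have hle := (lyapunov_le_add hw p).trans' (hmin hq)
  have hlin : ∑ i, ((p + ε • s) i - p i) * (b i - ∑ j, (w j i : ℝ)) =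
      ε * (∑ i ∈ S, (b i : ℝ) - ∑ i ∈ S, ∑ j, (w j i : ℝ)) := by
    simp only [s, Pi.add_apply, Pi.smul_apply, smul_eq_mul, add_sub_cancel_left, mul_ite,
      mul_one, mul_zero, ite_mul, zero_mul, sum_ite_mem, univ_inter]
    rw [← sum_sub_distrib, mul_sum]
  rw [hlin, le_add_iff_nonneg_right] at hle
  have := nonneg_of_mul_nonneg_right hle hε
  rw [sub_nonneg] at this
  exact_mod_cast this

theorem IsMinOn.sum_ite_add_le [DecidableEq Ω] {H T : N → Finset Ω} {c : N → ℕ} (hp : 0 ≤ p)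
    (hmin : IsMinOn (lyapunov b d v) (Set.Ici 0) p)
    (hsplit : ∀ j, IsDemandSplit b (d j) (fun i => v i j) p (H j) (T j) (c j))
    {S : Finset Ω} {U : Finset N} (hU : U.biUnion T ⊆ S) :
    ∑ i ∈ S, ∑ j, (if i ∈ H j then b i else 0) + ∑ j ∈ U, c j ≤ ∑ i ∈ S, b i := by
  classical
  obtain ⟨w, hw, hwS⟩ := hmin.exists_inDemand_sum_le hp S
  have hj : ∀ j, ∑ i ∈ S, (if i ∈ H j then b i else 0) + (if j ∈ U then c j else 0) ≤
      ∑ i ∈ S, w j i := fun j => by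
    split_ifs with hjU
    · exact (hsplit j).sum_ite_add_le (hw j) ((subset_biUnion_of_mem T hjU).trans hU)
    · exact (hsplit j).sum_ite_le (hw j) S
  have := sum_le_sum fun j (_ : j ∈ univ) => hj j
  rw [sum_add_distrib, sum_ite_mem, univ_inter, sum_comm, sum_comm (s := univ)] at this
  exact this.trans hwS

theorem IsMinOn.competitive (hp : 0 ≤ p) (hmin : IsMinOn (lyapunov b d v) (Set.Ici 0) p) :
    Competitive b d v p := by
  classical
  choose H T c hsplit using fun j => exists_isDemandSplit b (d j) (fun i => v i j) p
  -- `m i` units of good `i` are taken by buyers who must take all of it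
  set m : Ω → ℕ := fun i => ∑ j, if i ∈ H j then b i else 0
  have hm : ∀ i, m i ≤ b i := fun i => by
    simpa using hmin.sum_ite_add_le hp hsplit (S := {i}) (U := ∅) (empty_subset _)
  obtain ⟨g, hgT, hgrow, hgcol⟩ := exists_transport_of_hall T c (fun i => b i - m i) fun U => by
    have : ∑ i ∈ U.biUnion T, m i + ∑ j ∈ U, c j ≤ ∑ i ∈ U.biUnion T, b i :=
      hmin.sum_ite_add_le hp hsplit (subset_refl _)
    have : ∑ i ∈ U.biUnion T, (b i - m i) + ∑ i ∈ U.biUnion T, m i = ∑ i ∈ U.biUnion T, b i := by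
      rw [← sum_add_distrib]; exact sum_congr rfl fun i _ => Nat.sub_add_cancel (hm i)
    omega
  have hgb : ∀ j, g j ≤ b := fun j i =>
    (single_le_sum (f := fun j => g j i) (fun _ _ => Nat.zero_le _) (mem_univ j)).trans
      ((hgcol i).trans (Nat.sub_le _ _))
  refine ⟨hp, fun i j => (if i ∈ H j then b i else 0) + g j i, ⟨fun i => ?_, fun j => ?_⟩,
    fun j => (hsplit j).inDemand (g j) (hgb j) (hgT j) (hgrow j)⟩
  · have := hgcol i; have := hm i
    rw [sum_add_distrib]
    change m i + _ ≤ _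
    omega
  · rw [sum_add_distrib, sum_ite_mem, univ_inter, hgrow j]
    exact (hsplit j).sum_add_le

end Market

/-- there exists a unique componentwise minimum competitive price vector. -/
theorem exists_unique_min_competitive_prices
    {Ω N : Type*} [Fintype Ω] [Fintype N]
    (b : Ω → ℕ) (d : N → ℕ) (v : Ω → N → ℕ) :
    ∃! pstar : Ω → ℝ, Competitive b d v pstar ∧
      ∀ q : Ω → ℝ, Competitive b d v q → ∀ i, pstar i ≤ q i := by
  obtain ⟨p, ⟨hp, hpmin⟩, hleast⟩ := exists_isLeast_minimizers_lyapunov b d v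
  have hcomp : Competitive b d v p := hpmin.competitive hp
  have hle : ∀ q, Competitive b d v q → p ≤ q := fun q hq =>
    (hleast ⟨Set.mem_Ici.2 (le_inf hp fun i => hq.1 i),
      hpmin.lyapunov_inf (hq.lyapunov_le le_sup_right)⟩).trans inf_le_right
  exact ⟨p, ⟨hcomp, hle⟩, fun r hr => le_antisymm (hr.2 p hcomp) (hle r hr.1)⟩
end

section
/- Hall-type characterization of competitive prices: a price vector p is competitive if and only if ∑_{i∈I} b i ≥ d_p(I) for every subset I ⊆ Ω. -/
open Finset

section TierDefs

variable {Ω N : Type*}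

/-- The set `P` of positive payoffs `u i`. -/
noncomputable def posPayoffs [Fintype Ω] (u : Ω → ℝ) : Finset ℝ :=
  (Finset.univ.image u).filter (fun t => 0 < t)

/-- The threshold payoff `θ_j(p)`: the largest positive payoff value `t` such that the
supply of items with payoff at least `t` covers the demand, if it exists; otherwise the
minimum positive payoff value (and junk value `0` if there is no positive payoff). -/
noncomputable def theta [Fintype Ω] (b : Ω → ℕ) (dj : ℕ) (u : Ω → ℝ) : ℝ :=
  if hQ : ((posPayoffs u).filter
      (fun t => dj ≤ ∑ i ∈ Finset.univ.filter (fun i => t ≤ u i), b i)).Nonempty then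
    ((posPayoffs u).filter
      (fun t => dj ≤ ∑ i ∈ Finset.univ.filter (fun i => t ≤ u i), b i)).max' hQ
  else if hP : (posPayoffs u).Nonempty then (posPayoffs u).min' hP
  else 0

/-- `Ω'_j(p)`: objects with payoff strictly above the threshold. -/
noncomputable def OmegaP [Fintype Ω] (b : Ω → ℕ) (dj : ℕ) (u : Ω → ℝ) : Finset Ω :=
  if dj = 0 ∨ posPayoffs u = ∅ then ∅
  else Finset.univ.filter (fun i => theta b dj u < u i)

/-- `Ω''_j(p)`: objects with payoff equal to the threshold. -/
noncomputable def OmegaPP [Fintype Ω] (b : Ω → ℕ) (dj : ℕ) (u : Ω → ℝ) : Finset Ω :=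
  if dj = 0 ∨ posPayoffs u = ∅ then ∅
  else Finset.univ.filter (fun i => u i = theta b dj u)

/-- `Ω'''_j(p)`: objects with payoff zero. -/
noncomputable def OmegaPPP [Fintype Ω] (u : Ω → ℝ) : Finset Ω :=
  Finset.univ.filter (fun i => u i = 0)

/-- `d'_j(p)`. -/
noncomputable def dPr [Fintype Ω] (b : Ω → ℕ) (dj : ℕ) (u : Ω → ℝ) : ℕ :=
  ∑ i ∈ OmegaP b dj u, b i

/-- `d''_j(p)`. -/
noncomputable def dPPr [Fintype Ω] (b : Ω → ℕ) (dj : ℕ) (u : Ω → ℝ) : ℕ :=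
  min (∑ i ∈ OmegaPP b dj u, b i) (dj - dPr b dj u)

/-- Payoff function of buyer `j` at prices `p`. -/
noncomputable def payoff (v : Ω → N → ℕ) (p : Ω → ℝ) (j : N) (i : Ω) : ℝ :=
  (v i j : ℝ) - p i

/-- `d_p(I)`: total demand that must be served from the item set `I`
(here `a - b` is truncated subtraction on `ℕ`, i.e. `max (0, a - b)`). -/
noncomputable def overDemand [Fintype Ω] [Fintype N] [DecidableEq Ω] (b : Ω → ℕ)
    (d : N → ℕ) (v : Ω → N → ℕ) (p : Ω → ℝ) (I : Finset Ω) : ℕ :=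
  ∑ j : N,
    ((∑ i ∈ OmegaP b (d j) (payoff v p j) ∩ I, b i) +
      (dPPr b (d j) (payoff v p j) -
        ∑ i ∈ OmegaPP b (d j) (payoff v p j) \ I, min (b i) (dPPr b (d j) (payoff v p j))))

end TierDefs

/-!
A single buyer's demand set is explicit. By exchange arguments an optimal bundle takes all units
of every object whose payoff exceeds the threshold `θ` and exactly `d''` units of payoff `θ`;
conversely, every bundle of that shape that uses no other objects is optimal, because termwise
`u i * z i ≤ (u i - θ)⁺ * b i + θ * z i` on positive payoffs, and at most `d' + d''` units can be
bought at positive payoff. Hence `p` is competitive iff the supply can meet these requirements of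
all buyers at once. This is a transportation problem, and Hall's theorem on unit copies of supply
and demand shows that it is solvable iff no set `I` of objects is over-demanded.
-/

section Transport

variable {ι α : Type*} [Fintype ι] [Fintype α]

lemma card_filter_sigma_fst_eq [DecidableEq ι] (n : ι → ℕ) (k : ι) :
    #{l : Σ k, Fin (n k) | l.1 = k} = n k := by
  have : ({l : Σ k, Fin (n k) | l.1 = k} : Finset _) = ({k} : Finset ι).sigma fun _ => univ := by
    ext ⟨k', a⟩
    simp
  rw [this, card_sigma, sum_singleton, card_univ, Fintype.card_fin]

theorem exists_transport_of_hall_s7 [DecidableEq α] (b : α → ℕ) (c : ι → ℕ) (S : ι → Finset α)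
    (hall : ∀ K : Finset ι, ∑ k ∈ K, c k ≤ ∑ i ∈ K.biUnion S, b i) :
    ∃ x : α → ι → ℕ, (∀ i, ∑ k, x i k ≤ b i) ∧ (∀ k, ∑ i ∈ S k, x i k = c k) ∧
      ∀ k, ∀ i ∉ S k, x i k = 0 := by
  classical
  -- Hall's theorem for the units `Σ k, Fin (c k)` of demand and `Σ i, Fin (b i)` of supply.
  let t : (Σ k, Fin (c k)) → Finset (Σ i, Fin (b i)) := fun l => {r | r.1 ∈ S l.1}
  have unit_hall : ∀ s : Finset (Σ k, Fin (c k)), #s ≤ #(s.biUnion t) := by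
    intro s
    have hs : s ⊆ (s.image Sigma.fst).sigma fun _ => univ := fun l hl =>
      mem_sigma.mpr ⟨mem_image_of_mem _ hl, mem_univ _⟩
    have ht : s.biUnion t = ((s.image Sigma.fst).biUnion S).sigma fun _ => univ := by
      ext r
      simp [t]
    calc #s ≤ ∑ k ∈ s.image Sigma.fst, c k := by simpa [card_sigma] using card_le_card hs
      _ ≤ ∑ i ∈ (s.image Sigma.fst).biUnion S, b i := hall _
      _ = #(s.biUnion t) := by simp [ht, card_sigma]
  obtain ⟨f, hf_inj, hf_mem⟩ := (all_card_le_biUnion_card_iff_exists_injective t).mp unit_hall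
  have hf_mem' : ∀ l, (f l).1 ∈ S l.1 := fun l => by simpa [t] using hf_mem l
  refine ⟨fun i k => #{l | l.1 = k ∧ (f l).1 = i}, fun i => ?_, fun k => ?_, fun k i hi => ?_⟩
  · calc ∑ k, #{l | l.1 = k ∧ (f l).1 = i}
        = #{l | (f l).1 = i} := by
          rw [card_eq_sum_card_fiberwise (f := Sigma.fst) (t := univ) (by simp)]
          simp only [filter_filter, and_comm]
      _ ≤ #{r : Σ i, Fin (b i) | r.1 = i} :=
          card_le_card_of_injOn f (fun l hl => by simpa using hl) hf_inj.injOn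
      _ = b i := card_filter_sigma_fst_eq b i
  · calc ∑ i ∈ S k, #{l | l.1 = k ∧ (f l).1 = i}
        = #{l : Σ k, Fin (c k) | l.1 = k} := by
          rw [card_eq_sum_card_fiberwise (f := fun l => (f l).1) (t := S k)
            (fun l hl => by simpa [(mem_filter.mp hl).2] using hf_mem' l)]
          simp only [filter_filter]
      _ = c k := card_filter_sigma_fst_eq c k
  · simp only [card_eq_zero, filter_eq_empty_iff]
    rintro l - ⟨rfl, rfl⟩
    exact hi (hf_mem' l)

end Transport

section ForcedDemand

variable {Ω : Type*} [DecidableEq Ω]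

/-- The summand of `overDemand`: the least amount that a bundle taking all of `A` and `c` units
from `B`, at most `b i` of each, must take inside `I`. -/
def forcedDemand (b : Ω → ℕ) (A B : Finset Ω) (c : ℕ) (I : Finset Ω) : ℕ :=
  ∑ i ∈ A ∩ I, b i + (c - ∑ i ∈ B \ I, min (b i) c)

lemma forcedDemand_le_sum (b : Ω → ℕ) {A B : Finset Ω} (hAB : Disjoint A B) {y : Ω → ℕ}
    (hyb : ∀ i, y i ≤ b i) (hA : ∀ i ∈ A, y i = b i) {c : ℕ} (hB : ∑ i ∈ B, y i = c)
    (I : Finset Ω) : forcedDemand b A B c I ≤ ∑ i ∈ I, y i := by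
  have hAI : ∑ i ∈ A ∩ I, b i = ∑ i ∈ A ∩ I, y i :=
    (sum_congr rfl fun i hi => hA i (mem_inter.mp hi).1).symm
  have hBI : ∑ i ∈ B \ I, y i ≤ ∑ i ∈ B \ I, min (b i) c := sum_le_sum fun i hi =>
    le_min (hyb i) (hB ▸ single_le_sum (fun _ _ => Nat.zero_le _) (mem_sdiff.mp hi).1)
  have hB' := sum_inter_add_sum_sdiff B I y
  have hI : ∑ i ∈ A ∩ I, y i + ∑ i ∈ B ∩ I, y i ≤ ∑ i ∈ I, y i := by
    rw [← sum_union (disjoint_of_subset_left inter_subset_left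
      (disjoint_of_subset_right inter_subset_left hAB))]
    exact sum_le_sum_of_subset (union_subset inter_subset_right inter_subset_right)
  rw [forcedDemand]
  omega

end ForcedDemand

section Allocation

variable {Ω N : Type*} [Fintype Ω] [Fintype N] [DecidableEq Ω]

theorem exists_allocation_of_hall (b : Ω → ℕ) (A B : N → Finset Ω) (c : N → ℕ)
    (hAB : ∀ j, Disjoint (A j) (B j))
    (hall : ∀ I : Finset Ω, ∑ j, forcedDemand b (A j) (B j) (c j) I ≤ ∑ i ∈ I, b i) :
    ∃ x : Ω → N → ℕ, (∀ i, ∑ j, x i j ≤ b i) ∧ (∀ j, ∀ i ∈ A j, x i j = b i) ∧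
      (∀ j, ∑ i ∈ B j, x i j = c j) ∧ ∀ j i, x i j ≠ 0 → i ∈ A j ∨ i ∈ B j := by
  classical
  -- Buyer `j` becomes the node `(j, none)` demanding `c j` from `B j`, together with one node
  -- `(j, some i)` demanding all of item `i` for each `i ∈ A j`.
  let c' : N × Option Ω → ℕ := fun q => q.2.elim (c q.1) fun i => if i ∈ A q.1 then b i else 0
  let S : N × Option Ω → Finset Ω := fun q => q.2.elim (B q.1) fun i => {i}
  have hall' : ∀ K, ∑ q ∈ K, c' q ≤ ∑ i ∈ K.biUnion S, b i := by
    intro K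
    set I := K.biUnion S
    refine le_trans ?_ (hall I)
    have hK : ∑ q ∈ K, c' q = ∑ j, ((if (j, none) ∈ K then c j else 0) +
        ∑ i, if (j, some i) ∈ K then (if i ∈ A j then b i else 0) else 0) := by
      rw [show ∑ q ∈ K, c' q = ∑ q, if q ∈ K then c' q else 0 by simp, Fintype.sum_prod_type]
      simp only [Fintype.sum_option, c', Option.elim]
    rw [hK]
    refine sum_le_sum fun j _ => ?_
    rw [forcedDemand, add_comm]
    gcongr
    · rw [← univ_inter (A j ∩ I), ← sum_ite_mem]
      refine sum_le_sum fun i _ => ?_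
      split_ifs with hq hA hAI <;> try simp
      exact absurd (mem_inter.mpr ⟨hA, mem_biUnion.mpr ⟨_, hq, mem_singleton_self i⟩⟩) hAI
    · split_ifs with hq
      · have hBI : B j \ I = ∅ := sdiff_eq_empty_iff_subset.mpr (subset_biUnion_of_mem S hq)
        simp [hBI]
      · exact Nat.zero_le _
  obtain ⟨x, hsupply, hdemand, hsupp⟩ := exists_transport_of_hall_s7 b c' S hall'
  have hsome : ∀ i j, x i (j, some i) = if i ∈ A j then b i else 0 := fun i j => by
    simpa [S, c'] using hdemand (j, some i)
  refine ⟨fun i j => x i (j, none) + x i (j, some i), fun i => ?_, fun j i hi => ?_,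
    fun j => ?_, fun j i hne => ?_⟩
  · refine le_trans ?_ ((Fintype.sum_prod_type _).symm.trans_le (hsupply i))
    refine sum_le_sum fun j _ => ?_
    dsimp only
    rw [Fintype.sum_option]
    gcongr
    exact single_le_sum (f := fun i' => x i (j, some i')) (fun _ _ => Nat.zero_le _) (mem_univ i)
  · dsimp only
    rw [hsupp (j, none) i (disjoint_left.mp (hAB j) hi), hsome, if_pos hi, zero_add]
  · have hB : ∀ i ∈ B j, x i (j, some i) = 0 := fun i hi => by
      rw [hsome, if_neg (disjoint_right.mp (hAB j) hi)]
    rw [sum_add_distrib, sum_eq_zero hB, add_zero]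
    exact hdemand (j, none)
  · by_contra h
    rw [not_or] at h
    apply hne
    dsimp only
    rw [hsupp (j, none) i h.2, hsome, if_neg h.1]

end Allocation

section Tiers

variable {Ω : Type*} [Fintype Ω] (b : Ω → ℕ) (m : ℕ) (u : Ω → ℝ)

lemma mem_posPayoffs {t : ℝ} : t ∈ posPayoffs u ↔ (∃ i, u i = t) ∧ 0 < t := by
  simp [posPayoffs]

lemma theta_mem_posPayoffs (hP : (posPayoffs u).Nonempty) : theta b m u ∈ posPayoffs u := by
  unfold theta
  split_ifs with hQ
  · exact mem_of_mem_filter _ (max'_mem _ hQ)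
  · exact min'_mem _ hP

lemma theta_pos (hP : (posPayoffs u).Nonempty) : 0 < theta b m u :=
  ((mem_posPayoffs u).mp (theta_mem_posPayoffs b m u hP)).2

lemma le_theta {t : ℝ} (ht : t ∈ posPayoffs u) (hm : m ≤ ∑ i with t ≤ u i, b i) :
    t ≤ theta b m u := by
  have hQ : t ∈ (posPayoffs u).filter (fun t => m ≤ ∑ i with t ≤ u i, b i) :=
    mem_filter.mpr ⟨ht, hm⟩
  rw [theta, dif_pos ⟨t, hQ⟩]
  exact le_max' _ _ hQ

lemma le_sum_theta_or_theta_eq_min' (hP : (posPayoffs u).Nonempty) :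
    m ≤ ∑ i with theta b m u ≤ u i, b i ∨ theta b m u = (posPayoffs u).min' hP := by
  by_cases hQ : ((posPayoffs u).filter (fun t => m ≤ ∑ i with t ≤ u i, b i)).Nonempty
  · left
    have hθ : theta b m u = _ := dif_pos hQ
    have hmem := max'_mem _ hQ
    rw [← hθ, mem_filter] at hmem
    exact hmem.2
  · right
    rw [theta, dif_neg hQ, dif_pos hP]

variable {b m u}

lemma mem_OmegaP (hm : m ≠ 0) (hP : (posPayoffs u).Nonempty) {i : Ω} :
    i ∈ OmegaP b m u ↔ theta b m u < u i := by
  simp [OmegaP, hm, hP.ne_empty]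

lemma mem_OmegaPP (hm : m ≠ 0) (hP : (posPayoffs u).Nonempty) {i : Ω} :
    i ∈ OmegaPP b m u ↔ u i = theta b m u := by
  simp [OmegaPP, hm, hP.ne_empty]

variable (b m u)

lemma disjoint_OmegaP_OmegaPP : Disjoint (OmegaP b m u) (OmegaPP b m u) := by
  unfold OmegaP OmegaPP
  split_ifs
  · exact disjoint_empty_left _
  · exact disjoint_filter.mpr fun i _ hlt heq => hlt.ne' heq

lemma sum_theta_le_eq (hm : m ≠ 0) (hP : (posPayoffs u).Nonempty) :
    ∑ i with theta b m u ≤ u i, b i = dPr b m u + ∑ i ∈ OmegaPP b m u, b i := by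
  classical
  rw [dPr, ← sum_union (disjoint_OmegaP_OmegaPP b m u)]
  congr 1
  ext i
  simp only [mem_filter, mem_univ, true_and, mem_union, mem_OmegaP hm hP, mem_OmegaPP hm hP]
  exact le_iff_lt_or_eq.trans (or_congr_right eq_comm)

lemma dPr_lt (hm : m ≠ 0) (hP : (posPayoffs u).Nonempty) : dPr b m u < m := by
  by_contra! h
  have hne : (OmegaP b m u).Nonempty :=
    nonempty_of_sum_ne_zero (s := OmegaP b m u) (f := b) (by rw [← dPr]; omega)
  obtain ⟨i₀, hi₀, hmin⟩ := exists_min_image _ u hne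
  have hθ : theta b m u < u i₀ := (mem_OmegaP hm hP).mp hi₀
  have hcover : dPr b m u ≤ ∑ i with u i₀ ≤ u i, b i :=
    sum_le_sum_of_subset fun i hi => by simpa using hmin i hi
  have hpos : u i₀ ∈ posPayoffs u :=
    (mem_posPayoffs u).mpr ⟨⟨i₀, rfl⟩, (theta_pos b m u hP).trans hθ⟩
  exact hθ.not_ge (le_theta b m u hpos (h.trans hcover))

lemma dPr_add_dPPr_le : dPr b m u + dPPr b m u ≤ m := by
  by_cases h : m = 0 ∨ posPayoffs u = ∅
  · simp [dPr, dPPr, OmegaP, OmegaPP, h]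
  rw [not_or, ← not_nonempty_iff_eq_empty, not_not] at h
  have := dPr_lt b m u h.1 h.2
  rw [dPPr]
  omega

lemma min_sum_pos_le_dPr_add_dPPr (hm : m ≠ 0) (hP : (posPayoffs u).Nonempty) :
    min m (∑ i with 0 < u i, b i) ≤ dPr b m u + dPPr b m u := by
  have hsplit := sum_theta_le_eq b m u hm hP
  have hlt := dPr_lt b m u hm hP
  rw [dPPr]
  rcases le_sum_theta_or_theta_eq_min' b m u hP with hcover | hθ
  · omega
  · have : ∑ i with 0 < u i, b i = ∑ i with theta b m u ≤ u i, b i := by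
      congr 1
      ext i
      simp only [mem_filter, mem_univ, true_and]
      refine ⟨fun hi => hθ ▸ min'_le _ _ ((mem_posPayoffs u).mpr ⟨⟨i, rfl⟩, hi⟩),
        fun hi => (theta_pos b m u hP).trans_le hi⟩
    omega

lemma sum_mul_nonpos_of_degenerate (h : m = 0 ∨ posPayoffs u = ∅) {z : Ω → ℕ}
    (hz : IsBundle b m z) : ∑ i, u i * z i ≤ 0 := by
  rcases h with hm | hP
  · have hz0 : ∀ i, z i = 0 := fun i => Nat.eq_zero_of_le_zero
      (hm ▸ (single_le_sum (fun _ _ => Nat.zero_le _) (mem_univ i)).trans hz.2)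
    simp [hz0]
  · refine sum_nonpos fun i _ => mul_nonpos_of_nonpos_of_nonneg ?_ (Nat.cast_nonneg _)
    by_contra! hi
    simpa [hP] using (mem_posPayoffs u).mpr ⟨⟨i, rfl⟩, hi⟩

lemma sum_mul_le_of_isBundle (hm : m ≠ 0) (hP : (posPayoffs u).Nonempty) {z : Ω → ℕ}
    (hz : IsBundle b m z) :
    ∑ i, u i * z i ≤ ∑ i ∈ OmegaP b m u, (u i - theta b m u) * b i +
      theta b m u * (dPr b m u + dPPr b m u) := by
  set θ := theta b m u
  have hθ : 0 < θ := theta_pos b m u hP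
  have hterm : ∀ i, u i * z i ≤
      (if θ < u i then (u i - θ) * b i else 0) + (if 0 < u i then θ * z i else 0) := by
    intro i
    have hzb : (z i : ℝ) ≤ b i := by exact_mod_cast hz.1 i
    have hz0 : (0 : ℝ) ≤ z i := Nat.cast_nonneg _
    split_ifs <;> nlinarith
  have hOmegaP : OmegaP b m u = univ.filter (θ < u ·) := by
    ext i
    simp [mem_OmegaP hm hP, θ]
  have hpos : ((∑ i with 0 < u i, z i : ℕ) : ℝ) ≤ dPr b m u + dPPr b m u := by
    exact_mod_cast (le_min ((sum_le_sum_of_subset (filter_subset _ _)).trans hz.2)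
      (sum_le_sum fun i _ => hz.1 i)).trans (min_sum_pos_le_dPr_add_dPPr b m u hm hP)
  calc ∑ i, u i * z i
      ≤ ∑ i, ((if θ < u i then (u i - θ) * b i else 0) + (if 0 < u i then θ * z i else 0)) :=
        sum_le_sum fun i _ => hterm i
    _ = ∑ i ∈ OmegaP b m u, (u i - θ) * b i + θ * ((∑ i with 0 < u i, z i : ℕ) : ℝ) := by
        rw [sum_add_distrib, ← sum_filter, ← sum_filter, hOmegaP, Nat.cast_sum, mul_sum]
    _ ≤ _ := by gcongr

end Tiers

section Demand

variable {Ω : Type*} [Fintype Ω]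

/-- `InDemand`, stated for a payoff vector `u` in place of `v - p`. -/
def IsOptimalBundle (b : Ω → ℕ) (m : ℕ) (u : Ω → ℝ) (y : Ω → ℕ) : Prop :=
  IsBundle b m y ∧ ∀ z, IsBundle b m z → ∑ i, u i * z i ≤ ∑ i, u i * y i

lemma sum_eq_sum_add_sum_of_support [DecidableEq Ω] {M : Type*} [AddCommMonoid M]
    {A B : Finset Ω} (hAB : Disjoint A B) {f : Ω → M} (hf : ∀ i, f i ≠ 0 → i ∈ A ∨ i ∈ B) :
    ∑ i, f i = ∑ i ∈ A, f i + ∑ i ∈ B, f i := by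
  rw [← sum_union hAB]
  refine (sum_subset (subset_univ _) fun i _ hi => ?_).symm
  by_contra h
  exact hi (mem_union.mpr (hf i h))

lemma sum_add_single_one [DecidableEq Ω] (y : Ω → ℕ) (i : Ω) :
    ∑ k, (y + Pi.single i 1 : Ω → ℕ) k = ∑ k, y k + 1 := by
  simp [sum_add_distrib]

lemma sum_mul_add_single_one [DecidableEq Ω] (u : Ω → ℝ) (y : Ω → ℕ) (i : Ω) :
    ∑ k, u k * ((y + Pi.single i 1 : Ω → ℕ) k : ℝ) = ∑ k, u k * y k + u i := by
  simp [mul_add, sum_add_distrib, Pi.single_apply]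

variable {b : Ω → ℕ} {m : ℕ} {u : Ω → ℝ} {y : Ω → ℕ}

lemma IsOptimalBundle.sum_eq_of_lt (hy : IsOptimalBundle b m u y) {i : Ω} (hi : y i < b i)
    (hu : 0 < u i) : ∑ k, y k = m := by
  classical
  by_contra hne
  have hz : IsBundle b m (y + Pi.single i 1) := by
    refine ⟨fun k => ?_, ?_⟩
    · rcases eq_or_ne k i with rfl | hk
      · simpa using hi
      · simpa [hk] using hy.1.1 k
    · have := hy.1.2
      rw [sum_add_single_one]
      omega
  have := hy.2 _ hz
  rw [sum_mul_add_single_one] at this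
  linarith

lemma IsOptimalBundle.le_of_lt_of_ne_zero (hy : IsOptimalBundle b m u y) {i k : Ω}
    (hi : y i < b i) (hk : y k ≠ 0) : u i ≤ u k := by
  classical
  rcases eq_or_ne i k with rfl | hik
  · rfl
  set w := y - Pi.single k 1
  have hw : w + Pi.single k 1 = y := by
    ext l
    rcases eq_or_ne l k with rfl | hl
    · simp [w]
      omega
    · simp [w, hl]
  have hz : IsBundle b m (w + Pi.single i 1) := by
    refine ⟨fun l => ?_, ?_⟩
    · rcases eq_or_ne l i with rfl | hl
      · simp [w, hik]
        omega
      · have := hy.1.1 l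
        simp [w, hl]
        omega
    · rw [sum_add_single_one, ← sum_add_single_one w k, hw]
      exact hy.1.2
  have hwy := sum_mul_add_single_one u w k
  rw [hw] at hwy
  have := hy.2 _ hz
  rw [sum_mul_add_single_one, hwy] at this
  linarith

lemma IsOptimalBundle.eq_of_mem_OmegaP (hy : IsOptimalBundle b m u y) {i : Ω}
    (hi : i ∈ OmegaP b m u) : y i = b i := by
  by_cases h : m = 0 ∨ posPayoffs u = ∅
  · simp [OmegaP, h] at hi
  rw [not_or, ← not_nonempty_iff_eq_empty, not_not] at h
  obtain ⟨hm, hP⟩ := h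
  -- Otherwise the budget `m` is spent, by exchange only on objects above `θ`, of supply `d' < m`.
  by_contra hne
  have hlt : y i < b i := (hy.1.1 i).lt_of_ne hne
  have hθ := (mem_OmegaP hm hP).mp hi
  have hsum := hy.sum_eq_of_lt hlt ((theta_pos b m u hP).trans hθ)
  have hcarried : ∑ k ∈ OmegaP b m u, y k = ∑ k, y k :=
    sum_subset (subset_univ _) fun k _ hk => by
      by_contra hyk
      exact hk ((mem_OmegaP hm hP).mpr (hθ.trans_le (hy.le_of_lt_of_ne_zero hlt hyk)))
  have hshort : ∑ k ∈ OmegaP b m u, y k < dPr b m u :=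
    sum_lt_sum (fun k _ => hy.1.1 k) ⟨i, hi, hlt⟩
  have := dPr_lt b m u hm hP
  omega

lemma IsOptimalBundle.sum_OmegaPP_eq (hy : IsOptimalBundle b m u y) :
    ∑ i ∈ OmegaPP b m u, y i = dPPr b m u := by
  classical
  by_cases h : m = 0 ∨ posPayoffs u = ∅
  · simp [dPPr, OmegaPP, h]
  rw [not_or, ← not_nonempty_iff_eq_empty, not_not] at h
  obtain ⟨hm, hP⟩ := h
  have hΩ' : ∑ i ∈ OmegaP b m u, y i = dPr b m u :=
    sum_congr rfl fun i hi => hy.eq_of_mem_OmegaP hi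
  have hle : ∑ i ∈ OmegaPP b m u, y i ≤ ∑ i ∈ OmegaPP b m u, b i :=
    sum_le_sum fun i _ => hy.1.1 i
  have htot : ∑ i ∈ OmegaP b m u, y i + ∑ i ∈ OmegaPP b m u, y i ≤ m := by
    rw [← sum_union (disjoint_OmegaP_OmegaPP b m u)]
    exact (sum_le_sum_of_subset (subset_univ _)).trans hy.1.2
  refine le_antisymm (by rw [dPPr]; omega) ?_
  by_contra! hlt
  obtain ⟨i, hi, hlt_i⟩ := exists_lt_of_sum_lt (hlt.trans_le (min_le_left _ _))
  have hθ := (mem_OmegaPP hm hP).mp hi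
  have hsum := hy.sum_eq_of_lt hlt_i (hθ ▸ theta_pos b m u hP)
  have hsplit : ∑ k, y k = ∑ k ∈ OmegaP b m u, y k + ∑ k ∈ OmegaPP b m u, y k :=
    sum_eq_sum_add_sum_of_support (disjoint_OmegaP_OmegaPP b m u) fun k hk => by
      rw [mem_OmegaP hm hP, mem_OmegaPP hm hP, ← hθ, eq_comm]
      exact (hy.le_of_lt_of_ne_zero hlt_i hk).lt_or_eq
  have := dPr_add_dPPr_le b m u
  omega

section Tiered

variable (hΩ' : ∀ i ∈ OmegaP b m u, y i = b i) (hΩ'' : ∑ i ∈ OmegaPP b m u, y i = dPPr b m u)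
  (hsupp : ∀ i, y i ≠ 0 → i ∈ OmegaP b m u ∨ i ∈ OmegaPP b m u)
include hΩ' hΩ'' hsupp

lemma sum_eq_dPr_add_dPPr : ∑ i, y i = dPr b m u + dPPr b m u := by
  classical
  rw [sum_eq_sum_add_sum_of_support (disjoint_OmegaP_OmegaPP b m u) hsupp, hΩ'', dPr,
    sum_congr rfl hΩ']

lemma isOptimalBundle_of_tiers (hyb : ∀ i, y i ≤ b i) : IsOptimalBundle b m u y := by
  classical
  refine ⟨⟨hyb, (sum_eq_dPr_add_dPPr hΩ' hΩ'' hsupp).trans_le (dPr_add_dPPr_le b m u)⟩,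
    fun z hz => ?_⟩
  have hvalue : ∑ i, u i * y i =
      ∑ i ∈ OmegaP b m u, u i * b i + ∑ i ∈ OmegaPP b m u, u i * y i := by
    rw [sum_eq_sum_add_sum_of_support (disjoint_OmegaP_OmegaPP b m u)
      (f := fun i => u i * y i) fun i hi => hsupp i fun h => by simp [h] at hi]
    exact congrArg (· + _) (sum_congr rfl fun i hi => by rw [hΩ' i hi])
  by_cases h : m = 0 ∨ posPayoffs u = ∅
  · simpa [hvalue, OmegaP, OmegaPP, h] using sum_mul_nonpos_of_degenerate b m u h hz
  rw [not_or, ← not_nonempty_iff_eq_empty, not_not] at h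
  obtain ⟨hm, hP⟩ := h
  have hΩ''value : ∑ i ∈ OmegaPP b m u, u i * y i = theta b m u * dPPr b m u := by
    rw [← hΩ'', Nat.cast_sum, mul_sum]
    exact sum_congr rfl fun i hi => by rw [(mem_OmegaPP hm hP).mp hi]
  refine (sum_mul_le_of_isBundle b m u hm hP hz).trans_eq ?_
  rw [hvalue, hΩ''value, dPr, Nat.cast_sum, mul_add, mul_sum, ← add_assoc, ← sum_add_distrib]
  simp only [sub_mul, sub_add_cancel]

end Tiered

end Demand

/-- Hall-type characterization of competitive prices. -/
theorem competitive_iff_hall_condition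
    {Ω N : Type*} [Fintype Ω] [Fintype N] [DecidableEq Ω]
    (b : Ω → ℕ) (d : N → ℕ) (v : Ω → N → ℕ)
    (p : Ω → ℝ) (hp : ∀ i, 0 ≤ p i) :
    Competitive b d v p ↔ ∀ I : Finset Ω, overDemand b d v p I ≤ ∑ i ∈ I, b i := by
  have hdisj j := disjoint_OmegaP_OmegaPP b (d j) (payoff v p j)
  constructor
  · rintro ⟨-, x, ⟨hsupply, -⟩, hdemand⟩ I
    have hopt : ∀ j, IsOptimalBundle b (d j) (payoff v p j) (fun i => x i j) := hdemand
    calc overDemand b d v p I ≤ ∑ j, ∑ i ∈ I, x i j :=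
          sum_le_sum fun j _ => forcedDemand_le_sum b (hdisj j) (hopt j).1.1
            (fun _ => (hopt j).eq_of_mem_OmegaP) (hopt j).sum_OmegaPP_eq I
      _ = ∑ i ∈ I, ∑ j, x i j := sum_comm
      _ ≤ ∑ i ∈ I, b i := sum_le_sum fun i _ => hsupply i
  · intro hall
    obtain ⟨x, hsupply, hΩ', hΩ'', hsupp⟩ := exists_allocation_of_hall b _ _ _ hdisj hall
    have hopt : ∀ j, IsOptimalBundle b (d j) (payoff v p j) (fun i => x i j) := fun j =>
      isOptimalBundle_of_tiers (hΩ' j) (hΩ'' j) (hsupp j) fun i =>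
        (single_le_sum (fun _ _ => Nat.zero_le _) (mem_univ j)).trans (hsupply i)
    exact ⟨hp, x, ⟨hsupply, fun j => (hopt j).1.2⟩, hopt⟩
end
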